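/- Let L/K be a finite Galois field extension of characteristic-zero fields, and let D: K → K be a derivation. Then there exists a unique derivation D̃: L → L extending D, and D̃ commutes with every element of the Galois group: σ ∘ D̃ = D̃ ∘ σ for all σ ∈ Gal(L/K). -/

import Mathlib

/-!
If `f` is the minimal polynomial of `y ∈ L` over `K`, applying an extension `D'` of `D` to
`f(y) = 0` gives `f^D(y) + f'(y) D'(y) = 0`, and `f'(y) ≠ 0` since `f` is separable in
characteristic zero. So `D'(y) = -f^D(y) / f'(y)` is forced: this gives uniqueness, and, since `σ`
maps `y` to another root of `f`, also `σ (D' y) = D' (σ y)`. For existence, write `L = K(α)` with a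
primitive element `α` and define `D'` on `K[X] / (minpoly α)` by that formula.

Mathlib develops this for ℤ-derivations (`Differential`); additive maps between ℚ-vector spaces
are ℚ-linear, so ℚ-derivations and ℤ-derivations of ℚ-algebras are the same.
-/

open Differential

namespace Derivation

def toRatDerivation {A M : Type*} [CommRing A] [Algebra ℚ A] [AddCommGroup M] [Module A M]
    [Module ℚ M] (d : Derivation ℤ A M) : Derivation ℚ A M :=
  mk' d.toAddMonoidHom.toRatLinearMap d.leibniz

variable {K L : Type*} [Field K] [Field L] [Algebra K L] [CharZero K] [CharZero L]

theorem exists_extends_of_finiteDimensional [FiniteDimensional K L] (D : Derivation ℚ K K) :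
    ∃ D' : Derivation ℚ L L, ∀ x : K, D' (algebraMap K L x) = algebraMap K L (D x) := by
  let : Differential K := ⟨D.restrictScalars ℤ⟩
  let := differentialFiniteDimensional K L
  have : DifferentialAlgebra K L := differentialAlgebraFiniteDimensional
  exact ⟨Differential.deriv.toRatDerivation, deriv_algebraMap⟩

theorem eq_of_extends_of_finiteDimensional [FiniteDimensional K L]
    {D : Derivation ℚ K K} {D₁ D₂ : Derivation ℚ L L}
    (h₁ : ∀ x : K, D₁ (algebraMap K L x) = algebraMap K L (D x))
    (h₂ : ∀ x : K, D₂ (algebraMap K L x) = algebraMap K L (D x)) : D₁ = D₂ := by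
  let : Differential K := ⟨D.restrictScalars ℤ⟩
  have h := (uniqueDifferentialAlgebraFiniteDimensional (F := K) (K := L)).instSubsingleton.elim
    ⟨⟨D₁.restrictScalars ℤ⟩, @DifferentialAlgebra.mk K L _ _ _ _ ⟨D₁.restrictScalars ℤ⟩ h₁⟩
    ⟨⟨D₂.restrictScalars ℤ⟩, @DifferentialAlgebra.mk K L _ _ _ _ ⟨D₂.restrictScalars ℤ⟩ h₂⟩
  ext y
  exact congr($h.1.deriv y)

theorem algEquiv_apply_of_extends [Algebra.IsSeparable K L]
    {D : Derivation ℚ K K} {D' : Derivation ℚ L L}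
    (hD' : ∀ x : K, D' (algebraMap K L x) = algebraMap K L (D x)) (σ : L ≃ₐ[K] L) (y : L) :
    σ (D' y) = D' (σ y) := by
  let : Differential K := ⟨D.restrictScalars ℤ⟩
  let : Differential L := ⟨D'.restrictScalars ℤ⟩
  have : DifferentialAlgebra K L := ⟨hD'⟩
  exact algEquiv_deriv' σ y

end Derivation

theorem derivation_extends_galois_general (K L : Type*) [Field K] [Field L] [Algebra K L]
    [CharZero K] [CharZero L] [FiniteDimensional K L]
    (D : Derivation ℚ K K) :
    (∃! D' : Derivation ℚ L L,
        ∀ x : K, D' (algebraMap K L x) = algebraMap K L (D x)) ∧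
      ∀ D' : Derivation ℚ L L,
        (∀ x : K, D' (algebraMap K L x) = algebraMap K L (D x)) →
          ∀ (σ : L ≃ₐ[K] L) (y : L), σ (D' y) = D' (σ y) := by
  obtain ⟨D', hD'⟩ := D.exists_extends_of_finiteDimensional (L := L)
  exact ⟨⟨D', hD', fun _ h ↦ Derivation.eq_of_extends_of_finiteDimensional h hD'⟩,
    fun _ h ↦ Derivation.algEquiv_apply_of_extends h⟩

/-- A derivation on a characteristic-zero field `K` extends uniquely to a derivation of any
finite Galois extension `L/K`, and the extension commutes with every element of the Galois
group. -/
theorem derivation_extends_galois (K L : Type*) [Field K] [Field L] [Algebra K L]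
    [CharZero K] [CharZero L] [FiniteDimensional K L] [IsGalois K L]
    (D : Derivation ℚ K K) :
    (∃! D' : Derivation ℚ L L,
        ∀ x : K, D' (algebraMap K L x) = algebraMap K L (D x)) ∧
      ∀ D' : Derivation ℚ L L,
        (∀ x : K, D' (algebraMap K L x) = algebraMap K L (D x)) →
          ∀ (σ : L ≃ₐ[K] L) (y : L), σ (D' y) = D' (σ y) :=
  derivation_extends_galois_general K L D
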